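/- Theorem 4.8 (iii): For each A > 0 the set { a·1_{[u,T]} : |a| ≤ A, u ∈ [0,T] } is relatively mJ1-compact in D([0,T]), i.e. its closure in (D([0,T]), d) is compact. -/

import Mathlib

open MeasureTheory Filter Set Topology

noncomputable section

/-- `x` is càdlàg on `[0,T]`: right-continuous at every `t ∈ [0,T)` and
admitting a left limit at every `t ∈ (0,T]`. -/
def Cadlag (T : ℝ) (x : ℝ → ℝ) : Prop :=
  (∀ t ∈ Set.Ico (0:ℝ) T, Filter.Tendsto x (nhdsWithin t (Set.Ioi t)) (nhds (x t))) ∧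
  (∀ t ∈ Set.Ioc (0:ℝ) T, ∃ L : ℝ, Filter.Tendsto x (nhdsWithin t (Set.Iio t)) (nhds L))

/-- membership in `𝕍`: càdlàg of finite total variation on `[0,T]`. -/
def MemV (T : ℝ) (v : ℝ → ℝ) : Prop :=
  Cadlag T v ∧ BoundedVariationOn v (Set.Icc 0 T)

/-- `μ` is the finite signed (Lebesgue–Stieltjes) measure induced by `v` on `[0,T]`:
`μ([0,t]) = v(t)` for `t ∈ [0,T]`, and `μ` vanishes outside `[0,T]`. -/
def Represents (T : ℝ) (μ : MeasureTheory.SignedMeasure ℝ) (v : ℝ → ℝ) : Prop :=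
  (∀ t ∈ Set.Icc (0:ℝ) T, μ (Set.Icc 0 t) = v t) ∧
  (∀ s : Set ℝ, MeasurableSet s → s ∩ Set.Icc (0:ℝ) T = ∅ → μ s = 0)

/-- Integral of `f` against a signed measure. -/
noncomputable def sInt (μ : MeasureTheory.SignedMeasure ℝ) (f : ℝ → ℝ) : ℝ :=
  (∫ t, f t ∂μ.toJordanDecomposition.posPart) - (∫ t, f t ∂μ.toJordanDecomposition.negPart)

/-- `∫_{[0,T]} f dv` : integral of `f` with respect to the Lebesgue–Stieltjes
signed measure induced by `v` on `[0,T]`. -/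
noncomputable def intD (T : ℝ) (f v : ℝ → ℝ) : ℝ :=
  letI := Classical.propDecidable (∃ μ : MeasureTheory.SignedMeasure ℝ, Represents T μ v)
  if h : ∃ μ : MeasureTheory.SignedMeasure ℝ, Represents T μ v then sInt h.choose f else 0

/-- S-convergence `x_n →_S x₀` on `D([0,T])`. -/
def SConv (T : ℝ) (x : ℕ → ℝ → ℝ) (x₀ : ℝ → ℝ) : Prop :=
  ∀ ε > (0:ℝ), ∃ v : ℕ → ℝ → ℝ, ∃ v₀ : ℝ → ℝ,
    (∀ n, MemV T (v n)) ∧ MemV T v₀ ∧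
    (∀ n, ∀ t ∈ Set.Icc (0:ℝ) T, |x n t - v n t| ≤ ε) ∧
    (∀ t ∈ Set.Icc (0:ℝ) T, |x₀ t - v₀ t| ≤ ε) ∧
    (∀ f : ℝ → ℝ, Continuous f →
      Filter.Tendsto (fun n => intD T f (v n)) Filter.atTop (nhds (intD T f v₀)))

/-- `x_n ⇒*_S x₀` : every subsequence contains a further subsequence `→_S`-converging to `x₀`. -/
def SStarConv (T : ℝ) (x : ℕ → ℝ → ℝ) (x₀ : ℝ → ℝ) : Prop :=
  ∀ φ : ℕ → ℕ, StrictMono φ →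
    ∃ ψ : ℕ → ℕ, StrictMono ψ ∧ SConv T (fun k => x (φ (ψ k))) x₀

/-- membership in `𝔸([0,T])`: continuous, of finite variation, vanishing at `0`. -/
def MemA (T : ℝ) (A : ℝ → ℝ) : Prop :=
  ContinuousOn A (Set.Icc 0 T) ∧ BoundedVariationOn A (Set.Icc 0 T) ∧ A 0 = 0

/-- `A_n →_τ A₀` : uniform convergence on `[0,T]` together with uniformly bounded
total variations. -/
def TauConv (T : ℝ) (A : ℕ → ℝ → ℝ) (A₀ : ℝ → ℝ) : Prop :=
  TendstoUniformlyOn (fun n => A n) A₀ Filter.atTop (Set.Icc 0 T) ∧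
  ∃ M : ℝ, ∀ n, eVariationOn (A n) (Set.Icc 0 T) ≤ ENNReal.ofReal M

/-- `x` has (at least) `k` up-crossings of the levels `a < b` on `[0,T]`. -/
def HasUpcrossings (T a b : ℝ) (x : ℝ → ℝ) (k : ℕ) : Prop :=
  ∃ s u : Fin k → ℝ, (∀ i, 0 ≤ s i ∧ s i < u i ∧ u i ≤ T) ∧
    (∀ i j : Fin k, i < j → u i < s j) ∧
    (∀ i, x (s i) < a ∧ b < x (u i))

/-- `x` has (at least) `k` `η`-oscillations on `[0,T]`. -/
def HasOscillations (T η : ℝ) (x : ℝ → ℝ) (k : ℕ) : Prop :=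
  ∃ s u : Fin k → ℝ, (∀ i, 0 ≤ s i ∧ s i < u i ∧ u i ≤ T) ∧
    (∀ i j : Fin k, i < j → u i ≤ s j) ∧
    (∀ i, |x (u i) - x (s i)| > η)


/-- extension of `x ∈ D([0,T])` to a function which is `0` before `0` and
constantly `x T` after `T`. -/
def extFn (T : ℝ) (x : ℝ → ℝ) : ℝ → ℝ := fun t =>
  if t < 0 then 0 else if t < T then x t else x T

/-- `l` is an admissible time change of `[a,b]`: a strictly increasing continuous
bijection of `[a,b]` onto itself. -/
def TimeChange (a b : ℝ) (l : ℝ → ℝ) : Prop :=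
  ContinuousOn l (Set.Icc a b) ∧ StrictMonoOn l (Set.Icc a b) ∧
    l a = a ∧ l b = b ∧ Set.MapsTo l (Set.Icc a b) (Set.Icc a b)

/-- Billingsley's complete metric for the `J₁` topology on `D([a,b])`:
`d_Sk(x,y)` is the infimum, over time changes `l` of `[a,b]`, of the maximum of
`sup_{s<t} |log((l t - l s)/(t - s))|` and `sup_t |x t - y (l t)|`. -/
noncomputable def dSk (a b : ℝ) (x y : ℝ → ℝ) : ℝ :=
  sInf {r : ℝ | 0 ≤ r ∧ ∃ l : ℝ → ℝ, TimeChange a b l ∧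
    (∀ s ∈ Set.Icc a b, ∀ t ∈ Set.Icc a b, s < t →
      |Real.log ((l t - l s) / (t - s))| ≤ r) ∧
    (∀ t ∈ Set.Icc a b, |x t - y (l t)| ≤ r)}

/-- the metric of the `mJ₁` topology on `D([0,T])` (with parameter `ε > 0`). -/
noncomputable def dmJ (T ε : ℝ) (x y : ℝ → ℝ) : ℝ :=
  dSk (-ε) (T + ε) (extFn T x) (extFn T y)

/-! A single jump `a·1_{[u,T]}` is determined by the pair `(a, u)` in the compact rectangle
`[-A, A] × [0, T]`, so a subsequence of the pairs converges to some `(a₀, u₀)`. The extended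
jumps are `a·1_{[u,∞)}`, and the time change of `[-ε, T+ε]` that is linear on either side
of `u` and sends `u` to `u₀` matches the jump times exactly; its slopes tend to `1` and the
heights differ by `|a - a₀|`, so the Skorokhod distance to `a₀·1_{[u₀,T]}` tends to `0`. -/

theorem cadlag_indicator_Icc (T u a : ℝ) : Cadlag T ((Icc u T).indicator fun _ => a) := by
  constructor
  · intro t ht
    rcases le_or_gt u t with hut | htu
    · rw [indicator_of_mem (show t ∈ Icc u T from ⟨hut, ht.2.le⟩)]
      refine tendsto_const_nhds.congr' ?_
      filter_upwards [Ioo_mem_nhdsGT ht.2] with s hs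
      have hs' : s ∈ Icc u T := ⟨hut.trans hs.1.le, hs.2.le⟩
      exact (indicator_of_mem hs' fun _ => a).symm
    · rw [indicator_of_notMem fun h => htu.not_ge h.1]
      refine tendsto_const_nhds.congr' ?_
      filter_upwards [Ioo_mem_nhdsGT htu] with s hs
      exact (indicator_of_notMem (fun h => hs.2.not_ge h.1) fun _ => a).symm
  · intro t ht
    rcases lt_or_ge u t with hut | htu
    · refine ⟨a, tendsto_const_nhds.congr' ?_⟩
      filter_upwards [Ioo_mem_nhdsLT hut] with s hs
      have hs' : s ∈ Icc u T := ⟨hs.1.le, hs.2.le.trans ht.2⟩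
      exact (indicator_of_mem hs' fun _ => a).symm
    · refine ⟨0, tendsto_const_nhds.congr' ?_⟩
      filter_upwards [self_mem_nhdsWithin] with s (hs : s < t)
      exact (indicator_of_notMem (fun h => (hs.trans_le htu).not_ge h.1) fun _ => a).symm

theorem extFn_indicator_Icc {T u : ℝ} (hu : u ∈ Icc 0 T) (a : ℝ) :
    extFn T ((Icc u T).indicator fun _ => a) = (Ici u).indicator fun _ => a := by
  ext t
  simp only [extFn, indicator, mem_Icc, mem_Ici]
  grind

theorem dSk_nonneg (a b : ℝ) (x y : ℝ → ℝ) : 0 ≤ dSk a b x y :=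
  Real.sInf_nonneg fun _ hr => hr.1

theorem dSk_le_of_timeChange {a b r : ℝ} {x y l : ℝ → ℝ} (hr : 0 ≤ r)
    (hl : TimeChange a b l)
    (hslope : ∀ s ∈ Icc a b, ∀ t ∈ Icc a b, s < t → |Real.log ((l t - l s) / (t - s))| ≤ r)
    (hxy : ∀ t ∈ Icc a b, |x t - y (l t)| ≤ r) :
    dSk a b x y ≤ r :=
  csInf_le ⟨0, fun _ hρ => hρ.1⟩ ⟨hr, l, hl, hslope, hxy⟩

theorem abs_log_le_of_mem_Icc {m M q : ℝ} (hm : 0 < m) (hq : q ∈ Icc m M) :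
    |Real.log q| ≤ max |Real.log m| |Real.log M| :=
  abs_le_max_abs_abs (Real.log_le_log hm hq.1) (Real.log_le_log (hm.trans_le hq.1) hq.2)

def brokenLine (u u' c₁ c₂ : ℝ) (t : ℝ) : ℝ :=
  if t ≤ u then u' + c₁ * (t - u) else u' + c₂ * (t - u)

section brokenLine

variable {u u' c₁ c₂ : ℝ}

theorem continuous_brokenLine : Continuous (brokenLine u u' c₁ c₂) :=
  Continuous.if_le (by fun_prop) (by fun_prop) continuous_id continuous_const
    fun t ht => by rw [ht]; ring

theorem brokenLine_sub_mem_Icc {s t : ℝ} (hst : s < t) :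
    brokenLine u u' c₁ c₂ t - brokenLine u u' c₁ c₂ s ∈
      Icc (min c₁ c₂ * (t - s)) (max c₁ c₂ * (t - s)) := by
  have := min_le_left c₁ c₂; have := min_le_right c₁ c₂
  have := le_max_left c₁ c₂; have := le_max_right c₁ c₂
  simp only [brokenLine, mem_Icc]
  split_ifs <;> constructor <;> nlinarith

theorem slope_brokenLine_mem_Icc {s t : ℝ} (hst : s < t) :
    (brokenLine u u' c₁ c₂ t - brokenLine u u' c₁ c₂ s) / (t - s) ∈
      Icc (min c₁ c₂) (max c₁ c₂) := by
  have hts : 0 < t - s := sub_pos.2 hst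
  obtain ⟨hlo, hhi⟩ := brokenLine_sub_mem_Icc (u := u) (u' := u') (c₁ := c₁) (c₂ := c₂) hst
  exact ⟨(le_div_iff₀ hts).2 hlo, (div_le_iff₀ hts).2 hhi⟩

theorem strictMono_brokenLine (h₁ : 0 < c₁) (h₂ : 0 < c₂) :
    StrictMono (brokenLine u u' c₁ c₂) := fun _ _ hst =>
  sub_pos.1 <| (div_pos_iff_of_pos_right (sub_pos.2 hst)).1 <|
    (lt_min h₁ h₂).trans_le (slope_brokenLine_mem_Icc hst).1

theorem abs_log_slope_brokenLine_le (h₁ : 0 < c₁) (h₂ : 0 < c₂) {s t : ℝ} (hst : s < t) :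
    |Real.log ((brokenLine u u' c₁ c₂ t - brokenLine u u' c₁ c₂ s) / (t - s))| ≤
      max |Real.log c₁| |Real.log c₂| := by
  refine (abs_log_le_of_mem_Icc (lt_min h₁ h₂) (slope_brokenLine_mem_Icc hst)).trans_eq ?_
  rcases le_total c₁ c₂ with h | h
  · rw [min_eq_left h, max_eq_right h]
  · rw [min_eq_right h, max_eq_left h, max_comm]

theorem brokenLine_apply_self : brokenLine u u' c₁ c₂ u = u' := by
  simp [brokenLine]

end brokenLine

def pinTimeChange (a b u u' : ℝ) : ℝ → ℝ :=
  brokenLine u u' ((u' - a) / (u - a)) ((b - u') / (b - u))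

section pinTimeChange

variable {a b u u' : ℝ} (hu : u ∈ Ioo a b) (hu' : u' ∈ Ioo a b)
include hu hu'

theorem pinTimeChange_slopes_pos : 0 < (u' - a) / (u - a) ∧ 0 < (b - u') / (b - u) :=
  ⟨div_pos (by linarith [hu'.1]) (by linarith [hu.1]),
    div_pos (by linarith [hu'.2]) (by linarith [hu.2])⟩

theorem strictMono_pinTimeChange : StrictMono (pinTimeChange a b u u') :=
  strictMono_brokenLine (pinTimeChange_slopes_pos hu hu').1 (pinTimeChange_slopes_pos hu hu').2

theorem timeChange_pinTimeChange : TimeChange a b (pinTimeChange a b u u') := by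
  have hmono := strictMono_pinTimeChange hu hu'
  have ha : pinTimeChange a b u u' a = a := by
    have : u - a ≠ 0 := by linarith [hu.1]
    simp only [pinTimeChange, brokenLine, if_pos hu.1.le]
    field_simp; ring
  have hb : pinTimeChange a b u u' b = b := by
    have : b - u ≠ 0 := by linarith [hu.2]
    simp only [pinTimeChange, brokenLine, if_neg hu.2.not_ge]
    field_simp; ring
  refine ⟨continuous_brokenLine.continuousOn, hmono.strictMonoOn _, ha, hb, fun t ht => ?_⟩
  exact ⟨ha.symm.le.trans (hmono.monotone ht.1), (hmono.monotone ht.2).trans hb.le⟩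

theorem dSk_indicator_Ici_le (c c' : ℝ) :
    dSk a b ((Ici u).indicator fun _ => c) ((Ici u').indicator fun _ => c') ≤
      max (max |Real.log ((u' - a) / (u - a))| |Real.log ((b - u') / (b - u))|) |c - c'| := by
  have hmono := strictMono_pinTimeChange hu hu'
  refine dSk_le_of_timeChange (le_sup_right.trans' (abs_nonneg _))
    (timeChange_pinTimeChange hu hu') (fun _ _ _ _ hst => le_sup_left.trans' ?_) fun t _ => ?_
  · obtain ⟨h₁, h₂⟩ := pinTimeChange_slopes_pos hu hu'
    exact abs_log_slope_brokenLine_le h₁ h₂ hst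
  · have hiff : u' ≤ pinTimeChange a b u u' t ↔ u ≤ t := by
      simpa only [pinTimeChange, brokenLine_apply_self] using
        hmono.le_iff_le (a := u) (b := t)
    by_cases hut : u ≤ t
    · simp [indicator, hut, hiff.2 hut]
    · simp [indicator, hut, mt hiff.1 hut]

end pinTimeChange

theorem dmJ_indicator_Icc_le {T ε u u' : ℝ} (hε : 0 < ε) (hu : u ∈ Icc 0 T)
    (hu' : u' ∈ Icc 0 T) (c c' : ℝ) :
    dmJ T ε ((Icc u T).indicator fun _ => c) ((Icc u' T).indicator fun _ => c') ≤
      max (max |Real.log ((u' + ε) / (u + ε))| |Real.log ((T + ε - u') / (T + ε - u))|)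
        |c - c'| := by
  have hmem : ∀ v ∈ Icc 0 T, v ∈ Ioo (-ε) (T + ε) := fun v hv =>
    ⟨by linarith [hv.1], by linarith [hv.2]⟩
  rw [dmJ, extFn_indicator_Icc hu, extFn_indicator_Icc hu']
  simpa only [sub_neg_eq_add] using dSk_indicator_Ici_le (hmem u hu) (hmem u' hu') c c'

theorem stmt10_general (T : ℝ) (ε : ℝ) (hε : 0 < ε) (A : ℝ) :
    ∀ x : ℕ → ℝ → ℝ,
      (∀ n, ∃ a u : ℝ, |a| ≤ A ∧ u ∈ Set.Icc (0:ℝ) T ∧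
        x n = (Set.Icc u T).indicator fun _ => a) →
      ∃ φ : ℕ → ℕ, StrictMono φ ∧ ∃ x₀ : ℝ → ℝ, Cadlag T x₀ ∧
        Filter.Tendsto (fun k => dmJ T ε (x (φ k)) x₀) Filter.atTop (nhds 0) := by
  intro x hx
  choose a u ha hu hxn using hx
  obtain ⟨⟨a₀, u₀⟩, ⟨-, hu₀⟩, φ, hφ, hconv⟩ :=
    (isCompact_Icc.prod isCompact_Icc).tendsto_subseq
      fun n => (⟨abs_le.1 (ha n), hu n⟩ : (a n, u n) ∈ Icc (-A) A ×ˢ Icc 0 T)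
  refine ⟨φ, hφ, _, cadlag_indicator_Icc T u₀ a₀, ?_⟩
  have hpos : 0 < u₀ + ε ∧ 0 < T + ε - u₀ := ⟨by linarith [hu₀.1], by linarith [hu₀.2]⟩
  have hbound : ContinuousAt (fun p : ℝ × ℝ =>
      max (max |Real.log ((u₀ + ε) / (p.2 + ε))| |Real.log ((T + ε - u₀) / (T + ε - p.2))|)
        |p.1 - a₀|) (a₀, u₀) := by
    fun_prop (disch := simp [hpos.1.ne', hpos.2.ne'])
  refine squeeze_zero (fun _ => dSk_nonneg _ _ _ _) (fun k => ?_) (by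
    simpa [hpos.1.ne', hpos.2.ne'] using hbound.tendsto.comp hconv)
  rw [hxn]
  exact dmJ_indicator_Icc_le hε (hu _) hu₀ _ _

/-- Theorem 4.8 (iii): the set of single jumps `{a·1_{[u,T]} : |a| ≤ A, u ∈ [0,T]}`
is relatively `mJ₁`-compact. -/
theorem stmt10 (T : ℝ) (hT : 0 < T) (ε : ℝ) (hε : 0 < ε) (A : ℝ) (hA : 0 < A) :
    ∀ x : ℕ → ℝ → ℝ,
      (∀ n, ∃ a u : ℝ, |a| ≤ A ∧ u ∈ Set.Icc (0:ℝ) T ∧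
        x n = (Set.Icc u T).indicator fun _ => a) →
      ∃ φ : ℕ → ℕ, StrictMono φ ∧ ∃ x₀ : ℝ → ℝ, Cadlag T x₀ ∧
        Filter.Tendsto (fun k => dmJ T ε (x (φ k)) x₀) Filter.atTop (nhds 0) :=
  stmt10_general T ε hε A
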